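/- Let T > 0 and let h : [0,T] × ℝ → ℝ be an L¹-Carathéodory function. Let J = [x₁,x₂] ⊆ [0,T] be a closed interval such that h(x,s) ≥ 0 for a.e. x ∈ J and every s ≥ 0. Assume there exists a non-negative q_∞ ∈ L¹(J), not a.e. zero, such that liminf_{s→+∞} h(x,s)/s ≥ q_∞(x) uniformly for a.e. x ∈ J, meaning: for every ε > 0 there exists s₀ > 0 such that h(x,s) ≥ (q_∞(x) − ε) s for a.e. x ∈ J and every s ≥ s₀. Assume further that there exist μ with 0 < μ < 1 and a C¹ function φ : J → ℝ with absolutely continuous derivative, φ > 0 on the interior of J, φ(x₁) = φ(x₂) = 0, and φ'' + μ q_∞(x) φ = 0 a.e. on J (i.e., the first eigenvalue μ_J of φ'' + λ q_∞(x) φ = 0 with φ = 0 on ∂J satisfies μ_J < 1). Then there exists R_J > 0 such that for every L¹-Carathéodory function k : [0,T] × [0,∞) → ℝ with k(x,s) ≥ h(x,s) for a.e. x ∈ J and all s ≥ 0, every solution u of u'' + k(x,u) = 0 on [0,T] with u(x) ≥ 0 for all x ∈ [0,T], satisfying either the Neumann boundary conditions or the periodic boundary conditions, satisfies max_{x ∈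 J} u(x) < R_J. -/

import Mathlib

/-!
On `J = [x₁, x₂]` the equation reads `u'' = -k(x, u) ≤ 0`, so a non-negative solution is
concave on `J` and lies above the tent `M · min (x - x₁) (x₂ - x) / (x₂ - x₁)`, where
`M = max_J u`. Testing the equation against the eigenfunction `φ` (Green's identity, with
`φ'(x₁) ≥ 0 ≥ φ'(x₂)`) gives `∫_J k(x, u) φ ≤ μ ∫_J q φ u`, while the liminf condition gives
`k(x, u) ≥ (q - ε) u - s₀ q`. Hence `(1 - μ) ∫_J q φ u ≤ ε M ∫_J φ + s₀ ∫_J q φ`; the tent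
bounds the left side below by a multiple of `M`, and for small `ε` this bounds `M` by a
constant depending only on `q`, `φ`, `μ` and `s₀(ε)`.
-/

open MeasureTheory Set Filter

/-- `u` (with derivative `u'`) is a C¹ solution of `u'' + f(x) = 0` on `[0,T]`:
`u'` is absolutely continuous and the equation holds a.e., expressed via the
integral equation `u'(x) = u'(0) − ∫₀ˣ f(t) dt`. -/
def IsSolOn (T : ℝ) (f : ℝ → ℝ) (u u' : ℝ → ℝ) : Prop :=
  (∀ x ∈ Icc (0:ℝ) T, HasDerivWithinAt u (u' x) (Icc (0:ℝ) T) x) ∧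
  ContinuousOn u' (Icc (0:ℝ) T) ∧
  ∀ x ∈ Icc (0:ℝ) T, u' x = u' 0 - ∫ t in (0:ℝ)..x, f t

/-- The equation `u'' + a(x) g(u) = 0` on `[0,T]` has a positive solution
satisfying the Neumann boundary conditions. -/
def PosSolNeumann (T : ℝ) (a g : ℝ → ℝ) : Prop :=
  ∃ u u' : ℝ → ℝ, IsSolOn T (fun t => a t * g (u t)) u u' ∧
    (∀ x ∈ Icc (0:ℝ) T, 0 < u x) ∧ u' 0 = 0 ∧ u' T = 0

/-- The equation `u'' + a(x) g(u) = 0` on `[0,T]` has a positive solution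
satisfying the periodic boundary conditions. -/
def PosSolPeriodic (T : ℝ) (a g : ℝ → ℝ) : Prop :=
  ∃ u u' : ℝ → ℝ, IsSolOn T (fun t => a t * g (u t)) u u' ∧
    (∀ x ∈ Icc (0:ℝ) T, 0 < u x) ∧ u 0 = u T ∧ u' 0 = u' T

/-- `h : [0,T] × ℝ → ℝ` is an `L¹`-Carathéodory function. -/
def L1Caratheodory (T : ℝ) (h : ℝ → ℝ → ℝ) : Prop :=
  (∀ s : ℝ, Measurable fun x => h x s) ∧
  (∀ᵐ x ∂(volume.restrict (Icc (0:ℝ) T)), Continuous fun s => h x s) ∧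
  ∀ ρ : ℝ, 0 < ρ → ∃ γ : ℝ → ℝ, (∀ x, 0 ≤ γ x) ∧
    IntegrableOn γ (Icc (0:ℝ) T) volume ∧
    ∀ᵐ x ∂(volume.restrict (Icc (0:ℝ) T)), ∀ s : ℝ, |s| ≤ ρ → |h x s| ≤ γ x

/-- `k : [0,T] × [0,∞) → ℝ` is an `L¹`-Carathéodory function. -/
def L1CaratheodoryNonneg (T : ℝ) (k : ℝ → ℝ → ℝ) : Prop :=
  (∀ s : ℝ, 0 ≤ s → Measurable fun x => k x s) ∧
  (∀ᵐ x ∂(volume.restrict (Icc (0:ℝ) T)), ContinuousOn (fun s => k x s) (Ici (0:ℝ))) ∧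
  ∀ ρ : ℝ, 0 < ρ → ∃ γ : ℝ → ℝ, (∀ x, 0 ≤ γ x) ∧
    IntegrableOn γ (Icc (0:ℝ) T) volume ∧
    ∀ᵐ x ∂(volume.restrict (Icc (0:ℝ) T)), ∀ s : ℝ, 0 ≤ s → s ≤ ρ → |k x s| ≤ γ x

open scoped Topology

theorem aemeasurable_comp_of_continuousOn_Ici {α : Type*} [MeasurableSpace α] {ν : Measure α}
    {k : α → ℝ → ℝ} (hk : ∀ s, 0 ≤ s → Measurable fun x => k x s)
    (hkc : ∀ᵐ x ∂ν, ContinuousOn (k x) (Ici 0)) {u : α → ℝ} (hu : AEMeasurable u ν)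
    (hu0 : ∀ᵐ x ∂ν, 0 ≤ u x) :
    AEMeasurable (fun x => k x (u x)) ν := by
  -- `u` is approximated from below by functions with values in the countable set `ℕ / n`
  have happrox : ∀ n : ℕ, AEMeasurable (fun x => k x (⌊u x * n⌋₊ / n)) ν := fun n =>
    (measurable_from_prod_countable_left (f := fun p : α × ℕ => k p.1 (p.2 / n))
      fun m => hk ((m : ℝ) / n) (by positivity)).comp_aemeasurable
      (aemeasurable_id.prodMk (measurable_id.nat_floor.comp_aemeasurable (hu.mul_const _)))
  refine aemeasurable_of_tendsto_metrizable_ae atTop happrox ?_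
  filter_upwards [hkc, hu0] with x hkx hux
  have hlim : Tendsto (fun n : ℕ => (⌊u x * n⌋₊ : ℝ) / n) atTop (𝓝[Ici 0] (u x)) :=
    tendsto_nhdsWithin_iff.2 ⟨(tendsto_nat_floor_mul_div_atTop hux).comp
      tendsto_natCast_atTop_atTop, Eventually.of_forall fun n => mem_Ici.2 (by positivity)⟩
  exact (hkx (u x) hux).tendsto.comp hlim

theorem L1CaratheodoryNonneg.integrableOn_comp {T : ℝ} {k : ℝ → ℝ → ℝ}
    (hk : L1CaratheodoryNonneg T k) {u : ℝ → ℝ} (hu : ContinuousOn u (Icc 0 T))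
    (hu0 : ∀ x ∈ Icc 0 T, 0 ≤ u x) :
    IntegrableOn (fun x => k x (u x)) (Icc 0 T) := by
  obtain ⟨hmeas, hcont, hbound⟩ := hk
  obtain ⟨ρ, hρ⟩ := isCompact_Icc.exists_bound_of_continuousOn hu
  obtain ⟨γ, -, hγ, hkγ⟩ := hbound (max ρ 1) (by positivity)
  have hmeas_comp := aemeasurable_comp_of_continuousOn_Ici hmeas hcont
    (hu.aemeasurable measurableSet_Icc) (ae_restrict_of_forall_mem measurableSet_Icc hu0)
  refine hγ.mono' hmeas_comp.aestronglyMeasurable ?_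
  filter_upwards [hkγ, ae_restrict_mem measurableSet_Icc] with x hx hxT
  exact hx _ (hu0 x hxT) ((le_abs_self _).trans ((hρ x hxT).trans (le_max_left _ _)))

theorem ae_nonneg_and_sub_mul_sub_le {α : Type*} [MeasurableSpace α] {ν : Measure α}
    {h k : α → ℝ → ℝ} {q u : α → ℝ} {ε s₀ : ℝ} (hε : 0 ≤ ε) (hs₀ : 0 ≤ s₀)
    (hu0 : ∀ᵐ x ∂ν, 0 ≤ u x) (hq0 : ∀ᵐ x ∂ν, 0 ≤ q x)
    (hh0 : ∀ᵐ x ∂ν, ∀ s, 0 ≤ s → 0 ≤ h x s) (hhk : ∀ᵐ x ∂ν, ∀ s, 0 ≤ s → h x s ≤ k x s)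
    (hlarge : ∀ᵐ x ∂ν, ∀ s, s₀ ≤ s → (q x - ε) * s ≤ h x s) :
    ∀ᵐ x ∂ν, 0 ≤ k x (u x) ∧ (q x - ε) * u x - s₀ * q x ≤ k x (u x) := by
  filter_upwards [hu0, hq0, hh0, hhk, hlarge] with x hux hqx hhx hkx hlx
  refine ⟨(hhx _ hux).trans (hkx _ hux), le_trans ?_ (hkx _ hux)⟩
  rcases le_total s₀ (u x) with hs₀u | hus₀
  · nlinarith [hlx _ hs₀u, mul_nonneg hs₀ hqx]
  · nlinarith [hhx _ hux, mul_nonneg hε hux, mul_nonneg hqx (sub_nonneg.2 hus₀)]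

theorem integral_mul_pos_of_pos_on_Ioo {a b : ℝ} (hab : a ≤ b) {q w : ℝ → ℝ}
    (hq0 : ∀ᵐ x ∂(volume.restrict (Icc a b)), 0 ≤ q x)
    (hqne : ¬ ∀ᵐ x ∂(volume.restrict (Icc a b)), q x = 0) (hq : IntegrableOn q (Icc a b))
    (hw : ContinuousOn w (Icc a b)) (hwpos : ∀ x ∈ Ioo a b, 0 < w x) :
    0 < ∫ x in a..b, q x * w x := by
  have hint : Integrable (fun x => q x * w x) (volume.restrict (Icc a b)) :=
    hq.mul_continuousOn hw isCompact_Icc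
  rw [intervalIntegral.integral_of_le hab, ← integral_Icc_eq_integral_Ioc,
    ← Measure.restrict_congr_set Ioo_ae_eq_Icc]
  rw [← Measure.restrict_congr_set Ioo_ae_eq_Icc] at hq0 hqne hint
  have hnn : 0 ≤ᵐ[volume.restrict (Ioo a b)] fun x => q x * w x := by
    filter_upwards [hq0, ae_restrict_mem measurableSet_Ioo] with x hqx hx
    exact mul_nonneg hqx (hwpos x hx).le
  refine (integral_nonneg_of_ae hnn).lt_of_ne fun hzero => hqne ?_
  filter_upwards [(integral_eq_zero_iff_of_nonneg_ae hnn hint).1 hzero.symm,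
    ae_restrict_mem measurableSet_Ioo] with x hx hxI
  exact (mul_eq_zero.1 hx).resolve_right (hwpos x hxI).ne'

theorem integral_mul_deriv_eq_of_eq_sub_integral {a b : ℝ} (hab : a ≤ b) {F w ψ ψ' : ℝ → ℝ}
    (hF : IntervalIntegrable F volume a b) (hw : ∀ x ∈ Icc a b, w x = w a - ∫ t in a..x, F t)
    (hψ : ∀ x ∈ Icc a b, HasDerivWithinAt ψ (ψ' x) (Icc a b) x)
    (hψ' : ContinuousOn ψ' (Icc a b)) :
    ∫ x in a..b, w x * ψ' x = w b * ψ b - w a * ψ a + ∫ x in a..b, F x * ψ x := by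
  set W : ℝ → ℝ := fun x => w a - ∫ t in a..x, F t with hW
  -- integration by parts for absolutely continuous functions: `w` agrees on `[a, b]` with the
  -- absolutely continuous `W`, and `ψ` is Lipschitz
  have hWac : AbsolutelyContinuousOnInterval W a b :=
    (LipschitzWith.const (w a)).lipschitzOnWith.absolutelyContinuousOnInterval.sub
      (hF.absolutelyContinuousOnInterval_intervalIntegral left_mem_uIcc)
  obtain ⟨C, hC⟩ := isCompact_Icc.exists_bound_of_continuousOn hψ'
  have hψac : AbsolutelyContinuousOnInterval ψ a b := by
    refine LipschitzOnWith.absolutelyContinuousOnInterval (K := C.toNNReal) ?_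
    rw [uIcc_of_le hab]
    refine (convex_Icc a b).lipschitzOnWith_of_nnnorm_hasDerivWithin_le hψ fun x hx => ?_
    rw [← NNReal.coe_le_coe, coe_nnnorm]
    exact (hC x hx).trans (Real.le_coe_toNNReal C)
  have hae_ne : ∀ᵐ x ∂volume, x ≠ b := by simp [ae_iff, measure_singleton]
  have hleft : ∫ x in a..b, w x * ψ' x = ∫ x in a..b, W x * deriv ψ x := by
    refine intervalIntegral.integral_congr_ae (hae_ne.mono fun x hxb hx => ?_)
    rw [uIoc_of_le hab] at hx
    have hxo : x ∈ Ioo a b := ⟨hx.1, lt_of_le_of_ne hx.2 hxb⟩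
    rw [hw x (Ioo_subset_Icc_self hxo),
      ((hψ x (Ioo_subset_Icc_self hxo)).hasDerivAt (Icc_mem_nhds hxo.1 hxo.2)).deriv]
  have hright : ∫ x in a..b, deriv W x * ψ x = -∫ x in a..b, F x * ψ x := by
    rw [← intervalIntegral.integral_neg]
    refine intervalIntegral.integral_congr_ae (hF.ae_hasDerivAt_integral.mono fun x hF' hx => ?_)
    rw [((hF' (uIoc_subset_uIcc hx) a left_mem_uIcc).const_sub (w a)).deriv, neg_mul]
  have hWa : W a = w a := by simp [hW]
  have hWb : W b = w b := (hw b (right_mem_Icc.2 hab)).symm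
  rw [hleft, hWac.integral_mul_deriv_eq_deriv_mul hψac, hright, hWa, hWb]
  ring

theorem IsMinOn.nonneg_of_hasDerivWithinAt_Icc_left {f : ℝ → ℝ} {f' a b : ℝ} (hab : a < b)
    (hmin : IsMinOn f (Icc a b) a) (hf : HasDerivWithinAt f f' (Icc a b) a) : 0 ≤ f' := by
  have hcone : b - a ∈ posTangentConeAt (Icc a b) a :=
    sub_mem_posTangentConeAt_of_segment_subset (segment_eq_Icc hab.le ▸ Subset.rfl)
  have := hmin.localize.hasFDerivWithinAt_nonneg hf hcone
  rw [ContinuousLinearMap.toSpanSingleton_apply, smul_eq_mul] at this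
  exact nonneg_of_mul_nonneg_right this (sub_pos.2 hab)

theorem IsMinOn.nonpos_of_hasDerivWithinAt_Icc_right {f : ℝ → ℝ} {f' a b : ℝ} (hab : a < b)
    (hmin : IsMinOn f (Icc a b) b) (hf : HasDerivWithinAt f f' (Icc a b) b) : f' ≤ 0 := by
  have hcone : a - b ∈ posTangentConeAt (Icc a b) b :=
    sub_mem_posTangentConeAt_of_segment_subset (by rw [segment_symm, segment_eq_Icc hab.le])
  have := hmin.localize.hasFDerivWithinAt_nonneg hf hcone
  rw [ContinuousLinearMap.toSpanSingleton_apply, smul_eq_mul] at this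
  exact nonpos_of_mul_nonneg_right this (sub_neg.2 hab)

theorem ConcaveOn.abs_sub_mul_le_of_mem_segment {s : Set ℝ} {f : ℝ → ℝ} (hf : ConcaveOn ℝ s f)
    {p c y : ℝ} (hp : p ∈ s) (hc : c ∈ s) (hfp : 0 ≤ f p) (hy : y ∈ segment ℝ p c) :
    |y - p| * f c ≤ |c - p| * f y := by
  obtain ⟨θ, η, hθ, hη, hθη, rfl⟩ := hy
  have hconc := hf.2 hp hc hθ hη hθη
  simp only [smul_eq_mul] at hconc ⊢
  calc |θ * p + η * c - p| * f c = |c - p| * (η * f c) := by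
        rw [show θ * p + η * c - p = η * (c - p) by linear_combination p * hθη, abs_mul,
          abs_of_nonneg hη]
        ring
    _ ≤ |c - p| * f (θ * p + η * c) :=
        mul_le_mul_of_nonneg_left (by nlinarith [mul_nonneg hθ hfp]) (abs_nonneg _)

theorem ConcaveOn.mul_min_le {a b c y : ℝ} {f : ℝ → ℝ} (hf : ConcaveOn ℝ (Icc a b) f)
    (hf0 : ∀ x ∈ Icc a b, 0 ≤ f x) (hc : c ∈ Icc a b) (hy : y ∈ Icc a b) :
    f c * min (y - a) (b - y) ≤ (b - a) * f y := by
  have hab : a ≤ b := hy.1.trans hy.2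
  have hfc := hf0 c hc
  have hfy := hf0 y hy
  rcases le_total y c with hyc | hcy
  · have h := hf.abs_sub_mul_le_of_mem_segment (left_mem_Icc.2 hab) hc
      (hf0 a (left_mem_Icc.2 hab))
      (by rw [segment_eq_Icc hc.1]; exact ⟨hy.1, hyc⟩)
    rw [abs_of_nonneg (sub_nonneg.2 hy.1), abs_of_nonneg (sub_nonneg.2 hc.1)] at h
    nlinarith [min_le_left (y - a) (b - y), hc.2]
  · have h := hf.abs_sub_mul_le_of_mem_segment (right_mem_Icc.2 hab) hc
      (hf0 b (right_mem_Icc.2 hab))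
      (by rw [segment_symm, segment_eq_Icc hc.2]; exact ⟨hcy, hy.2⟩)
    rw [abs_of_nonpos (sub_nonpos.2 hy.2), abs_of_nonpos (sub_nonpos.2 hc.2)] at h
    nlinarith [min_le_right (y - a) (b - y), hc.1]

structure IsSolOnIcc (a b : ℝ) (f u u' : ℝ → ℝ) : Prop where
  hasDerivWithinAt : ∀ x ∈ Icc a b, HasDerivWithinAt u (u' x) (Icc a b) x
  continuousOn_deriv : ContinuousOn u' (Icc a b)
  deriv_eq : ∀ x ∈ Icc a b, u' x = u' a - ∫ t in a..x, f t

theorem IsSolOn.isSolOnIcc {T : ℝ} {f u u' : ℝ → ℝ} (h : IsSolOn T f u u') :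
    IsSolOnIcc 0 T f u u' :=
  ⟨h.1, h.2.1, h.2.2⟩

namespace IsSolOnIcc

variable {a b : ℝ} {f g G u u' φ φ' : ℝ → ℝ}

theorem continuousOn (hu : IsSolOnIcc a b f u u') :
    ContinuousOn u (Icc a b) :=
  fun x hx => (hu.hasDerivWithinAt x hx).continuousWithinAt

theorem hasDerivAt (hu : IsSolOnIcc a b f u u') {x : ℝ} (hx : x ∈ Ioo a b) :
    HasDerivAt u (u' x) x :=
  (hu.hasDerivWithinAt x (Ioo_subset_Icc_self hx)).hasDerivAt (Icc_mem_nhds hx.1 hx.2)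

theorem mono (hu : IsSolOnIcc a b f u u') (hf : IntervalIntegrable f volume a b) {c d : ℝ}
    (hcd : Icc c d ⊆ Icc a b) : IsSolOnIcc c d f u u' where
  hasDerivWithinAt x hx := (hu.hasDerivWithinAt x (hcd hx)).mono hcd
  continuousOn_deriv := hu.continuousOn_deriv.mono hcd
  deriv_eq x hx := by
    have hc : c ∈ Icc a b := hcd ⟨le_rfl, hx.1.trans hx.2⟩
    have hx' : x ∈ Icc a b := hcd hx
    rw [hu.deriv_eq x hx', hu.deriv_eq c hc, ← intervalIntegral.integral_add_adjacent_intervals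
      (hf.mono_set (uIcc_subset_uIcc left_mem_uIcc (Icc_subset_uIcc hc)))
      (hf.mono_set (uIcc_subset_uIcc (Icc_subset_uIcc hc) (Icc_subset_uIcc hx')))]
    ring

theorem antitoneOn_deriv (hu : IsSolOnIcc a b f u u') (hf : IntervalIntegrable f volume a b)
    (hf0 : 0 ≤ᵐ[volume.restrict (Icc a b)] f) : AntitoneOn u' (Icc a b) := by
  intro x hx y hy hxy
  rw [(hu.mono hf (Icc_subset_Icc hx.1 hy.2)).deriv_eq y ⟨hxy, le_rfl⟩, sub_le_self_iff]
  exact intervalIntegral.integral_nonneg_of_ae_restrict hxy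
    (ae_restrict_of_ae_restrict_of_subset (Icc_subset_Icc hx.1 hy.2) hf0)

theorem concaveOn (hu : IsSolOnIcc a b f u u') (hf : IntervalIntegrable f volume a b)
    (hf0 : 0 ≤ᵐ[volume.restrict (Icc a b)] f) : ConcaveOn ℝ (Icc a b) u := by
  have hderiv : ∀ x ∈ interior (Icc a b), HasDerivAt u (u' x) x := fun x hx =>
    hu.hasDerivAt (by rwa [interior_Icc] at hx)
  refine AntitoneOn.concaveOn_of_deriv (convex_Icc a b)
    (fun x hx => (hu.hasDerivWithinAt x hx).continuousWithinAt)
    (fun x hx => (hderiv x hx).differentiableAt.differentiableWithinAt) ?_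
  intro x hx y hy hxy
  rw [(hderiv x hx).deriv, (hderiv y hy).deriv]
  exact hu.antitoneOn_deriv hf hf0 (interior_subset hx) (interior_subset hy) hxy

theorem integral_mul_eq (hab : a ≤ b) (hu : IsSolOnIcc a b g u u') (hφ : IsSolOnIcc a b G φ φ')
    (hg : IntervalIntegrable g volume a b) (hG : IntervalIntegrable G volume a b)
    (hφa : φ a = 0) (hφb : φ b = 0) :
    ∫ x in a..b, g x * φ x = φ' b * u b - φ' a * u a + ∫ x in a..b, G x * u x := by
  have hu'φ' := integral_mul_deriv_eq_of_eq_sub_integral hab hg hu.deriv_eq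
    hφ.hasDerivWithinAt hφ.continuousOn_deriv
  have hφ'u' := integral_mul_deriv_eq_of_eq_sub_integral hab hG hφ.deriv_eq
    hu.hasDerivWithinAt hu.continuousOn_deriv
  simp only [mul_comm (φ' _)] at hφ'u'
  rw [hφa, hφb] at hu'φ'
  linarith

theorem integral_mul_le_integral_mul (hab : a < b) (hu : IsSolOnIcc a b g u u')
    (hφ : IsSolOnIcc a b G φ φ')
    (hg : IntervalIntegrable g volume a b) (hG : IntervalIntegrable G volume a b)
    (hu0 : ∀ x ∈ Icc a b, 0 ≤ u x) (hφ0 : ∀ x ∈ Icc a b, 0 ≤ φ x) (hφa : φ a = 0)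
    (hφb : φ b = 0) :
    ∫ x in a..b, g x * φ x ≤ ∫ x in a..b, G x * u x := by
  have ha : a ∈ Icc a b := left_mem_Icc.2 hab.le
  have hb : b ∈ Icc a b := right_mem_Icc.2 hab.le
  have hφ'a : 0 ≤ φ' a := IsMinOn.nonneg_of_hasDerivWithinAt_Icc_left hab
    (fun x hx => by simpa [hφa] using hφ0 x hx) (hφ.hasDerivWithinAt a ha)
  have hφ'b : φ' b ≤ 0 := IsMinOn.nonpos_of_hasDerivWithinAt_Icc_right hab
    (fun x hx => by simpa [hφb] using hφ0 x hx) (hφ.hasDerivWithinAt b hb)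
  rw [hu.integral_mul_eq hab.le hφ hg hG hφa hφb]
  nlinarith [mul_nonneg hφ'a (hu0 a ha), mul_nonpos_of_nonpos_of_nonneg hφ'b (hu0 b hb)]

end IsSolOnIcc

theorem IsSolOn.isSolOnIcc_of_subset {T a b : ℝ} {k : ℝ → ℝ → ℝ} {u u' : ℝ → ℝ}
    (hk : L1CaratheodoryNonneg T k) (hsol : IsSolOn T (fun t => k t (u t)) u u')
    (hu0 : ∀ x ∈ Icc 0 T, 0 ≤ u x) (hab : a ≤ b) (hJ : Icc a b ⊆ Icc 0 T) :
    IsSolOnIcc a b (fun t => k t (u t)) u u' ∧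
      IntervalIntegrable (fun t => k t (u t)) volume a b := by
  have h0T : 0 ≤ T := (hJ ⟨le_rfl, hab⟩).1.trans (hJ ⟨le_rfl, hab⟩).2
  have hg := hk.integrableOn_comp hsol.isSolOnIcc.continuousOn hu0
  exact ⟨hsol.isSolOnIcc.mono ((intervalIntegrable_iff_integrableOn_Icc_of_le h0T).2 hg) hJ,
    (intervalIntegrable_iff_integrableOn_Icc_of_le hab).2 (hg.mono_set hJ)⟩

theorem apriori_estimate {a b μ ε s₀ : ℝ} {q φ φ' g u u' : ℝ → ℝ} (hab : a < b) (hμ : μ ≤ 1)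
    (hε : 0 ≤ ε) (hφ : IsSolOnIcc a b (fun t => μ * (q t * φ t)) φ φ')
    (hφ0 : ∀ x ∈ Icc a b, 0 ≤ φ x) (hφa : φ a = 0) (hφb : φ b = 0)
    (hq0 : ∀ᵐ t ∂(volume.restrict (Icc a b)), 0 ≤ q t) (hq : IntervalIntegrable q volume a b)
    (hu : IsSolOnIcc a b g u u') (hg : IntervalIntegrable g volume a b)
    (hu0 : ∀ x ∈ Icc a b, 0 ≤ u x) (hg0 : ∀ᵐ t ∂(volume.restrict (Icc a b)), 0 ≤ g t)
    (hglow : ∀ᵐ t ∂(volume.restrict (Icc a b)), (q t - ε) * u t - s₀ * q t ≤ g t)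
    {c : ℝ} (hc : c ∈ Icc a b) (hmax : IsMaxOn u (Icc a b) c) :
    (1 - μ) * (∫ t in a..b, q t * (φ t * min (t - a) (b - t))) * u c ≤
      (b - a) * (ε * (∫ t in a..b, φ t) * u c + s₀ * ∫ t in a..b, q t * φ t) := by
  have hφc : ContinuousOn φ (uIcc a b) := by rw [uIcc_of_le hab.le]; exact hφ.continuousOn
  have huc : ContinuousOn u (uIcc a b) := by rw [uIcc_of_le hab.le]; exact hu.continuousOn
  have hqφ : IntervalIntegrable (fun t => q t * φ t) volume a b := hq.mul_continuousOn hφc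
  have hqφu : IntervalIntegrable (fun t => q t * φ t * u t) volume a b := hqφ.mul_continuousOn huc
  have hφu : IntervalIntegrable (fun t => φ t * u t) volume a b := (hφc.mul huc).intervalIntegrable
  have hgφ : IntervalIntegrable (fun t => g t * φ t) volume a b := hg.mul_continuousOn hφc
  have hupper : ∫ t in a..b, g t * φ t ≤ μ * ∫ t in a..b, q t * φ t * u t := by
    simpa only [mul_assoc, intervalIntegral.integral_const_mul] using
      hu.integral_mul_le_integral_mul hab hφ hg (hqφ.const_mul μ) hu0 hφ0 hφa hφb
  have hlower : (∫ t in a..b, q t * φ t * u t) - ε * (∫ t in a..b, φ t * u t)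
      - s₀ * (∫ t in a..b, q t * φ t) ≤ ∫ t in a..b, g t * φ t := by
    rw [← intervalIntegral.integral_const_mul, ← intervalIntegral.integral_const_mul,
      ← intervalIntegral.integral_sub hqφu (hφu.const_mul ε),
      ← intervalIntegral.integral_sub (hqφu.sub (hφu.const_mul ε)) (hqφ.const_mul s₀)]
    refine intervalIntegral.integral_mono_ae_restrict hab.le
      ((hqφu.sub (hφu.const_mul ε)).sub (hqφ.const_mul s₀)) hgφ ?_
    filter_upwards [hglow, ae_restrict_mem measurableSet_Icc] with t ht htI
    nlinarith [mul_le_mul_of_nonneg_right ht (hφ0 t htI)]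
  have hchord : u c * (∫ t in a..b, q t * (φ t * min (t - a) (b - t))) ≤
      (b - a) * ∫ t in a..b, q t * φ t * u t := by
    rw [← intervalIntegral.integral_const_mul, ← intervalIntegral.integral_const_mul]
    refine intervalIntegral.integral_mono_ae_restrict hab.le
      ((hq.mul_continuousOn (hφc.mul (by fun_prop))).const_mul _) (hqφu.const_mul _) ?_
    filter_upwards [hq0, ae_restrict_mem measurableSet_Icc] with t hqt htI
    have := (hu.concaveOn hg hg0).mul_min_le hu0 hc htI
    nlinarith [mul_le_mul_of_nonneg_left this (mul_nonneg hqt (hφ0 t htI))]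
  have hmass : ∫ t in a..b, φ t * u t ≤ u c * ∫ t in a..b, φ t := by
    rw [← intervalIntegral.integral_const_mul]
    refine intervalIntegral.integral_mono_on hab.le hφu (hφc.intervalIntegrable.const_mul _)
      fun t ht => ?_
    rw [mul_comm (u c)]
    exact mul_le_mul_of_nonneg_left (hmax ht) (hφ0 t ht)
  calc (1 - μ) * (∫ t in a..b, q t * (φ t * min (t - a) (b - t))) * u c
      ≤ (1 - μ) * ((b - a) * ∫ t in a..b, q t * φ t * u t) := by
        rw [mul_assoc, mul_comm _ (u c)]
        exact mul_le_mul_of_nonneg_left hchord (by linarith)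
    _ = (b - a) * ((1 - μ) * ∫ t in a..b, q t * φ t * u t) := by ring
    _ ≤ (b - a) * (ε * (∫ t in a..b, φ t) * u c + s₀ * ∫ t in a..b, q t * φ t) := by
        refine mul_le_mul_of_nonneg_left ?_ (by linarith)
        nlinarith [mul_le_mul_of_nonneg_left hmass hε]

theorem apriori_bound {a b μ s₀ : ℝ} {q φ φ' g u u' : ℝ → ℝ} (hab : a < b) (hμ : μ < 1)
    (hφ : IsSolOnIcc a b (fun t => μ * (q t * φ t)) φ φ') (hφpos : ∀ x ∈ Ioo a b, 0 < φ x)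
    (hφa : φ a = 0) (hφb : φ b = 0) (hq0 : ∀ᵐ t ∂(volume.restrict (Icc a b)), 0 ≤ q t)
    (hq : IntervalIntegrable q volume a b)
    (hA : 0 < ∫ t in a..b, q t * (φ t * min (t - a) (b - t))) (hB : 0 < ∫ t in a..b, φ t)
    (hu : IsSolOnIcc a b g u u') (hg : IntervalIntegrable g volume a b)
    (hu0 : ∀ x ∈ Icc a b, 0 ≤ u x) (hg0 : ∀ᵐ t ∂(volume.restrict (Icc a b)), 0 ≤ g t)
    (hglow : ∀ᵐ t ∂(volume.restrict (Icc a b)),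
      (q t - (1 - μ) * (∫ t in a..b, q t * (φ t * min (t - a) (b - t))) /
        (2 * (b - a) * ∫ t in a..b, φ t)) * u t - s₀ * q t ≤ g t) :
    ∀ y ∈ Icc a b, u y ≤ 2 * (b - a) * s₀ * (∫ t in a..b, q t * φ t) /
      ((1 - μ) * ∫ t in a..b, q t * (φ t * min (t - a) (b - t))) := by
  set A := ∫ t in a..b, q t * (φ t * min (t - a) (b - t))
  set B := ∫ t in a..b, φ t
  set ε := (1 - μ) * A / (2 * (b - a) * B) with hε
  have hφ0 : ∀ x ∈ Icc a b, 0 ≤ φ x := fun x hx => by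
    rcases eq_endpoints_or_mem_Ioo_of_mem_Icc hx with rfl | rfl | hx
    exacts [hφa.ge, hφb.ge, (hφpos x hx).le]
  obtain ⟨c, hc, hmax⟩ := isCompact_Icc.exists_isMaxOn (nonempty_Icc.2 hab.le) hu.continuousOn
  have hest := apriori_estimate hab hμ.le (by positivity) hφ hφ0 hφa hφb hq0 hq hu hg hu0 hg0
    hglow hc hmax
  -- the choice of `ε` makes the `ε`-term of the estimate half of its left-hand side
  have hεB : (b - a) * (ε * B * u c) = (1 - μ) * A * u c / 2 := by
    rw [hε]
    field_simp [(sub_pos.2 hab).ne']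
  intro y hy
  refine (hmax hy).trans ?_
  rw [le_div_iff₀ (mul_pos (sub_pos.2 hμ) hA)]
  linarith [mul_add (b - a) (ε * B * u c) (s₀ * ∫ t in a..b, q t * φ t)]

theorem statement_19_general
    (T : ℝ)
    (h : ℝ → ℝ → ℝ)
    (x₁ x₂ : ℝ) (hx1 : 0 ≤ x₁) (hx12 : x₁ ≤ x₂) (hx2 : x₂ ≤ T)
    (hh0 : ∀ᵐ x ∂(volume.restrict (Icc x₁ x₂)), ∀ s : ℝ, 0 ≤ s → 0 ≤ h x s)
    (q : ℝ → ℝ)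
    (hq0 : ∀ᵐ x ∂(volume.restrict (Icc x₁ x₂)), 0 ≤ q x)
    (hqint : IntegrableOn q (Icc x₁ x₂) volume)
    (hqne : ¬ (∀ᵐ x ∂(volume.restrict (Icc x₁ x₂)), q x = 0))
    (hliminf : ∀ ε : ℝ, 0 < ε → ∃ s₀ > (0:ℝ),
      ∀ᵐ x ∂(volume.restrict (Icc x₁ x₂)), ∀ s : ℝ, s₀ ≤ s →
        (q x - ε) * s ≤ h x s)
    (heig : ∃ μ : ℝ, 0 < μ ∧ μ < 1 ∧ ∃ φ φ' : ℝ → ℝ,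
      (∀ x ∈ Icc x₁ x₂, HasDerivWithinAt φ (φ' x) (Icc x₁ x₂) x) ∧
      ContinuousOn φ' (Icc x₁ x₂) ∧
      (∀ x ∈ Ioo x₁ x₂, 0 < φ x) ∧ φ x₁ = 0 ∧ φ x₂ = 0 ∧
      ∀ x ∈ Icc x₁ x₂, φ' x = φ' x₁ - μ * ∫ t in x₁..x, q t * φ t) :
    ∃ R : ℝ, 0 < R ∧ ∀ k : ℝ → ℝ → ℝ, L1CaratheodoryNonneg T k →
      (∀ᵐ x ∂(volume.restrict (Icc x₁ x₂)), ∀ s : ℝ, 0 ≤ s → h x s ≤ k x s) →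
      ∀ u u' : ℝ → ℝ, IsSolOn T (fun t => k t (u t)) u u' →
        (∀ x ∈ Icc (0:ℝ) T, 0 ≤ u x) →
        ((u' 0 = 0 ∧ u' T = 0) ∨ (u 0 = u T ∧ u' 0 = u' T)) →
        ∀ x ∈ Icc x₁ x₂, u x < R := by
  obtain ⟨μ, -, hμ1, φ, φ', hφd, hφ'c, hφpos, hφ1, hφ2, hφeq⟩ := heig
  have hlt : x₁ < x₂ := hx12.lt_of_ne fun heq => hqne (by simp [← heq, Measure.restrict_singleton])
  have hφ : IsSolOnIcc x₁ x₂ (fun t => μ * (q t * φ t)) φ φ' :=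
    ⟨hφd, hφ'c, fun x hx => by rw [hφeq x hx, intervalIntegral.integral_const_mul]⟩
  set A := ∫ t in x₁..x₂, q t * (φ t * min (t - x₁) (x₂ - t))
  set C := ∫ t in x₁..x₂, q t * φ t
  have hA : 0 < A := integral_mul_pos_of_pos_on_Ioo hx12 hq0 hqne hqint
    (hφ.continuousOn.mul (by fun_prop)) fun x hx => mul_pos (hφpos x hx) (by simp [hx.1, hx.2])
  set B := ∫ t in x₁..x₂, φ t
  have hB : 0 < B := intervalIntegral.intervalIntegral_pos_of_pos_on
    (hφ.continuousOn.intervalIntegrable_of_Icc hx12) hφpos hlt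
  have hε : 0 < (1 - μ) * A / (2 * (x₂ - x₁) * B) := by positivity
  obtain ⟨s₀, hs₀, hlim⟩ := hliminf _ hε
  refine ⟨|2 * (x₂ - x₁) * s₀ * C / ((1 - μ) * A)| + 1, by positivity,
    fun k hk hhk u u' hsol hun _ y hy => ?_⟩
  have hJ : Icc x₁ x₂ ⊆ Icc 0 T := Icc_subset_Icc hx1 hx2
  obtain ⟨hu, hg⟩ := hsol.isSolOnIcc_of_subset hk hun hx12 hJ
  have hkJ := ae_nonneg_and_sub_mul_sub_le hε.le hs₀.le
    (ae_restrict_of_forall_mem measurableSet_Icc fun x hx => hun x (hJ hx)) hq0 hh0 hhk hlim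
  have hbound := apriori_bound hlt hμ1 hφ hφpos hφ1 hφ2 hq0
    ((intervalIntegrable_iff_integrableOn_Icc_of_le hx12).2 hqint) hA hB hu hg
    (fun x hx => hun x (hJ hx)) (hkJ.mono fun _ => And.left) (hkJ.mono fun _ => And.right) y hy
  exact hbound.trans_lt ((le_abs_self _).trans_lt (lt_add_one _))

/-- A priori bound on the intervals where the nonlinearity is non-negative:
under the eigenvalue condition `μ_J < 1` (witnessed by a positive first
Dirichlet eigenpair of `φ'' + μ q_∞(x) φ = 0` on `J = [x₁,x₂]`), there is a
bound `R_J`, independent of `k`, for the maximum over `J` of any non-negative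
Neumann or periodic solution of `u'' + k(x,u) = 0` with `k ≥ h` a.e. on `J`. -/
theorem statement_19
    (T : ℝ) (hT : 0 < T)
    (h : ℝ → ℝ → ℝ) (hCar : L1Caratheodory T h)
    (x₁ x₂ : ℝ) (hx1 : 0 ≤ x₁) (hx12 : x₁ ≤ x₂) (hx2 : x₂ ≤ T)
    (hh0 : ∀ᵐ x ∂(volume.restrict (Icc x₁ x₂)), ∀ s : ℝ, 0 ≤ s → 0 ≤ h x s)
    (q : ℝ → ℝ)
    (hq0 : ∀ᵐ x ∂(volume.restrict (Icc x₁ x₂)), 0 ≤ q x)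
    (hqint : IntegrableOn q (Icc x₁ x₂) volume)
    (hqne : ¬ (∀ᵐ x ∂(volume.restrict (Icc x₁ x₂)), q x = 0))
    (hliminf : ∀ ε : ℝ, 0 < ε → ∃ s₀ > (0:ℝ),
      ∀ᵐ x ∂(volume.restrict (Icc x₁ x₂)), ∀ s : ℝ, s₀ ≤ s →
        (q x - ε) * s ≤ h x s)
    (heig : ∃ μ : ℝ, 0 < μ ∧ μ < 1 ∧ ∃ φ φ' : ℝ → ℝ,
      (∀ x ∈ Icc x₁ x₂, HasDerivWithinAt φ (φ' x) (Icc x₁ x₂) x) ∧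
      ContinuousOn φ' (Icc x₁ x₂) ∧
      (∀ x ∈ Ioo x₁ x₂, 0 < φ x) ∧ φ x₁ = 0 ∧ φ x₂ = 0 ∧
      ∀ x ∈ Icc x₁ x₂, φ' x = φ' x₁ - μ * ∫ t in x₁..x, q t * φ t) :
    ∃ R : ℝ, 0 < R ∧ ∀ k : ℝ → ℝ → ℝ, L1CaratheodoryNonneg T k →
      (∀ᵐ x ∂(volume.restrict (Icc x₁ x₂)), ∀ s : ℝ, 0 ≤ s → h x s ≤ k x s) →
      ∀ u u' : ℝ → ℝ, IsSolOn T (fun t => k t (u t)) u u' →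
        (∀ x ∈ Icc (0:ℝ) T, 0 ≤ u x) →
        ((u' 0 = 0 ∧ u' T = 0) ∨ (u 0 = u T ∧ u' 0 = u' T)) →
        ∀ x ∈ Icc x₁ x₂, u x < R :=
  statement_19_general T h x₁ x₂ hx1 hx12 hx2 hh0 q hq0 hqint hqne hliminf heig
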